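/- arXiv:2104.11449 — 9 statements merged into one kernel-verified Lean document; each statement's English description precedes it below -/
import Mathlib

section
/- For any combinatory pre-model A, combinatory pre-model B, n ≥ 1, homomorphism f : A → B, and elements b_1, ..., b_n of B, there exists a unique homomorphism g : A[x_1,...,x_n] → B such that g ∘ η_n = f and g(x_i) = b_i for each i ≤ n (universal property of the polynomial algebra). -/
/-- A combinatory pre-model: an applicative structure with constants
`k`, `s`, `i`, `e` satisfying the usual equations. -/
structure CPM : Type 1 where
  carrier : Type
  app : carrier → carrier → carrier
  k : carrier
  s : carrier
  i : carrier
  e : carrier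
  k_ax : ∀ a b, app (app k a) b = a
  s_ax : ∀ a b c, app (app (app s a) b) c = app (app a c) (app b c)
  i_ax : ∀ a, app i a = a
  e_ax : ∀ a b, app (app e a) b = app a b

/-- Homomorphisms of combinatory pre-models. -/
structure CPMHom (A B : CPM) where
  toFun : A.carrier → B.carrier
  map_app : ∀ a b, toFun (A.app a b) = B.app (toFun a) (toFun b)
  map_k : toFun A.k = B.k
  map_s : toFun A.s = B.s
  map_i : toFun A.i = B.i
  map_e : toFun A.e = B.e

/-- Terms: the free applicative structure over a set `S`. -/
inductive Tm (S : Type) : Type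
  | of : S → Tm S
  | app : Tm S → Tm S → Tm S

/-- The congruence generated by the combinator equations and the embedding
relation, defining the polynomial algebra over `A` in indeterminates `V`. -/
inductive PolyEq (A : CPM) (V : Type) : Tm (V ⊕ A.carrier) → Tm (V ⊕ A.carrier) → Prop
  | kEq (t u) : PolyEq A V (.app (.app (.of (.inr A.k)) t) u) t
  | sEq (t u v) : PolyEq A V (.app (.app (.app (.of (.inr A.s)) t) u) v)
      (.app (.app t v) (.app u v))
  | iEq (t) : PolyEq A V (.app (.of (.inr A.i)) t) t
  | eEq (t u) : PolyEq A V (.app (.app (.of (.inr A.e)) t) u) (.app t u)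
  | inj (a b : A.carrier) :
      PolyEq A V (.app (.of (.inr a)) (.of (.inr b))) (.of (.inr (A.app a b)))
  | refl (t) : PolyEq A V t t
  | symm {t u} : PolyEq A V t u → PolyEq A V u t
  | trans {t u v} : PolyEq A V t u → PolyEq A V u v → PolyEq A V t v
  | congr {t t' u u'} : PolyEq A V t t' → PolyEq A V u u' →
      PolyEq A V (.app t u) (.app t' u')

/-- Application on the quotient. -/
def polyApp (A : CPM) (V : Type) :
    Quot (PolyEq A V) → Quot (PolyEq A V) → Quot (PolyEq A V) :=
  Quot.lift
    (fun t => Quot.lift (fun u => Quot.mk _ (Tm.app t u))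
      (fun _ _ h => Quot.sound (PolyEq.congr (PolyEq.refl t) h)))
    (fun t t' h => by
      funext q
      induction q using Quot.ind with
      | _ u => exact Quot.sound (PolyEq.congr h (PolyEq.refl u)))

/-- The polynomial algebra `A[V]`. -/
def polyAlg (A : CPM) (V : Type) : CPM where
  carrier := Quot (PolyEq A V)
  app := polyApp A V
  k := Quot.mk _ (.of (.inr A.k))
  s := Quot.mk _ (.of (.inr A.s))
  i := Quot.mk _ (.of (.inr A.i))
  e := Quot.mk _ (.of (.inr A.e))
  k_ax := by
    intro a b
    induction a using Quot.ind with | _ t =>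
    induction b using Quot.ind with | _ u =>
    exact Quot.sound (PolyEq.kEq t u)
  s_ax := by
    intro a b c
    induction a using Quot.ind with | _ t =>
    induction b using Quot.ind with | _ u =>
    induction c using Quot.ind with | _ v =>
    exact Quot.sound (PolyEq.sEq t u v)
  i_ax := by
    intro a
    induction a using Quot.ind with | _ t =>
    exact Quot.sound (PolyEq.iEq t)
  e_ax := by
    intro a b
    induction a using Quot.ind with | _ t =>
    induction b using Quot.ind with | _ u =>
    exact Quot.sound (PolyEq.eEq t u)

/-- The canonical embedding `η : A → A[V]`. -/
def eta (A : CPM) (V : Type) : CPMHom A (polyAlg A V) where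
  toFun a := Quot.mk _ (.of (.inr a))
  map_app a b := (Quot.sound (PolyEq.inj a b)).symm
  map_k := rfl
  map_s := rfl
  map_i := rfl
  map_e := rfl

/-- The indeterminate `v` as an element of `A[V]`. -/
def xvar (A : CPM) (V : Type) (v : V) : (polyAlg A V).carrier :=
  Quot.mk _ (.of (.inl v))

theorem CPMHom.ext {A B : CPM} {g h : CPMHom A B} (H : g.toFun = h.toFun) : g = h := by
  cases g; cases h; subst H; rfl

namespace polyAlg

variable {A B : CPM} {V : Type}

def evalTm (f : CPMHom A B) (b : V → B.carrier) : Tm (V ⊕ A.carrier) → B.carrier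
  | .of (.inl v) => b v
  | .of (.inr a) => f.toFun a
  | .app t u => B.app (evalTm f b t) (evalTm f b u)

theorem evalTm_eq_of_polyEq (f : CPMHom A B) (b : V → B.carrier) {t u : Tm (V ⊕ A.carrier)}
    (h : PolyEq A V t u) : evalTm f b t = evalTm f b u := by
  induction h with
  | kEq => simp only [evalTm, f.map_k, B.k_ax]
  | sEq => simp only [evalTm, f.map_s, B.s_ax]
  | iEq => simp only [evalTm, f.map_i, B.i_ax]
  | eEq => simp only [evalTm, f.map_e, B.e_ax]
  | inj => simp only [evalTm, f.map_app]
  | refl => rfl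
  | symm _ ih => exact ih.symm
  | trans _ _ ih₁ ih₂ => exact ih₁.trans ih₂
  | congr _ _ ih₁ ih₂ => simp only [evalTm, ih₁, ih₂]

def lift (f : CPMHom A B) (b : V → B.carrier) : CPMHom (polyAlg A V) B where
  toFun := Quot.lift (evalTm f b) fun _ _ => evalTm_eq_of_polyEq f b
  map_app x y := by
    induction x using Quot.ind
    induction y using Quot.ind
    rfl
  map_k := f.map_k
  map_s := f.map_s
  map_i := f.map_i
  map_e := f.map_e

theorem lift_eta (f : CPMHom A B) (b : V → B.carrier) (a : A.carrier) :
    (lift f b).toFun ((eta A V).toFun a) = f.toFun a := rfl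

theorem lift_xvar (f : CPMHom A B) (b : V → B.carrier) (v : V) :
    (lift f b).toFun (xvar A V v) = b v := rfl

/-- `A[V]` is generated by `η(A)` and the indeterminates. -/
theorem hom_ext {g h : CPMHom (polyAlg A V) B}
    (h_eta : ∀ a, g.toFun ((eta A V).toFun a) = h.toFun ((eta A V).toFun a))
    (h_xvar : ∀ v, g.toFun (xvar A V v) = h.toFun (xvar A V v)) : g = h := by
  refine CPMHom.ext (funext fun x => ?_)
  induction x using Quot.ind with | _ t =>
  induction t with
  | of x =>
    cases x with
    | inl v => exact h_xvar v
    | inr a => exact h_eta a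
  | app t u iht ihu =>
    exact (g.map_app (Quot.mk _ t) (Quot.mk _ u)).trans
      ((congrArg₂ B.app iht ihu).trans (h.map_app _ _).symm)

end polyAlg

theorem polyAlg_universal_property_general (A B : CPM) (n : ℕ)
    (f : CPMHom A B) (b : Fin n → B.carrier) :
    ∃! g : CPMHom (polyAlg A (Fin n)) B,
      (∀ a, g.toFun ((eta A (Fin n)).toFun a) = f.toFun a) ∧
      (∀ i : Fin n, g.toFun (xvar A (Fin n) i) = b i) := by
  refine ⟨polyAlg.lift f b, ⟨polyAlg.lift_eta f b, polyAlg.lift_xvar f b⟩, ?_⟩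
  rintro g ⟨h_eta, h_xvar⟩
  exact polyAlg.hom_ext (fun a => (h_eta a).trans (polyAlg.lift_eta f b a).symm)
    (fun i => (h_xvar i).trans (polyAlg.lift_xvar f b i).symm)

/-- universal property of the polynomial algebra
`A[x₁,…,xₙ]`. -/
theorem polyAlg_universal_property (A B : CPM) (n : ℕ) (hn : 1 ≤ n)
    (f : CPMHom A B) (b : Fin n → B.carrier) :
    ∃! g : CPMHom (polyAlg A (Fin n)) B,
      (∀ a, g.toFun ((eta A (Fin n)).toFun a) = f.toFun a) ∧
      (∀ i : Fin n, g.toFun (xvar A (Fin n) i) = b i) :=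
  polyAlg_universal_property_general A B n f b
end

section
/- For any combinatory pre-model A, the quotient structure Ā₁ = (A/~₁, *₁, k₁, s₁, i₁, e₁) is isomorphic as a combinatory pre-model to the polynomial algebra A[x] in one indeterminate. -/
/-- The induced application `a ·₁ b = s a b`. -/
def op1 (A : CPM) (a b : A.carrier) : A.carrier := A.app (A.app A.s a) b

/-- The congruence `~₁` on `(A, ·₁)` of Definition quotient1. -/
inductive Sim1 (A : CPM) : A.carrier → A.carrier → Prop
  | kEq (a b) : Sim1 A (op1 A (op1 A (A.app A.k A.k) a) b) a
  | sEq (a b c) : Sim1 A (op1 A (op1 A (op1 A (A.app A.k A.s) a) b) c)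
      (op1 A (op1 A a c) (op1 A b c))
  | iEq (a) : Sim1 A (op1 A (A.app A.k A.i) a) a
  | eEq (a b) : Sim1 A (op1 A (op1 A (A.app A.k A.e) a) b) (op1 A a b)
  | inj (a b) : Sim1 A (op1 A (A.app A.k a) (A.app A.k b)) (A.app A.k (A.app a b))
  | eta (a) : Sim1 A (op1 A (A.app A.k a) A.i) a
  | refl (a) : Sim1 A a a
  | symm {a b} : Sim1 A a b → Sim1 A b a
  | trans {a b c} : Sim1 A a b → Sim1 A b c → Sim1 A a c
  | congr {a a' b b'} : Sim1 A a a' → Sim1 A b b' → Sim1 A (op1 A a b) (op1 A a' b')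

/-- Reflexivity of a combinatory pre-model: `a ~₁ b` implies `e a = e b`. -/
def Reflexive1 (A : CPM) : Prop :=
  ∀ a b, Sim1 A a b → A.app A.e a = A.app A.e b

/-- Application on the quotient `A/~₁`. -/
def barApp (A : CPM) : Quot (Sim1 A) → Quot (Sim1 A) → Quot (Sim1 A) :=
  Quot.lift
    (fun a => Quot.lift (fun b => Quot.mk _ (op1 A a b))
      (fun _ _ h => Quot.sound (Sim1.congr (Sim1.refl a) h)))
    (fun a a' h => by
      funext q
      induction q using Quot.ind with
      | _ b => exact Quot.sound (Sim1.congr h (Sim1.refl b)))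

/-- The quotient combinatory pre-model `Ā₁`. -/
def barA1 (A : CPM) : CPM where
  carrier := Quot (Sim1 A)
  app := barApp A
  k := Quot.mk _ (A.app A.k A.k)
  s := Quot.mk _ (A.app A.k A.s)
  i := Quot.mk _ (A.app A.k A.i)
  e := Quot.mk _ (A.app A.k A.e)
  k_ax := by
    intro a b
    induction a using Quot.ind with | _ x =>
    induction b using Quot.ind with | _ y =>
    exact Quot.sound (Sim1.kEq x y)
  s_ax := by
    intro a b c
    induction a using Quot.ind with | _ x =>
    induction b using Quot.ind with | _ y =>
    induction c using Quot.ind with | _ z =>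
    exact Quot.sound (Sim1.sEq x y z)
  i_ax := by
    intro a
    induction a using Quot.ind with | _ x =>
    exact Quot.sound (Sim1.iEq x)
  e_ax := by
    intro a b
    induction a using Quot.ind with | _ x =>
    induction b using Quot.ind with | _ y =>
    exact Quot.sound (Sim1.eEq x y)

section Aux

variable (A : CPM)

/-- The indeterminate `x` as a term. -/
def xTm : Tm (Unit ⊕ A.carrier) := .of (.inl ())

/-- The term `a · x`. -/
def fTm (a : A.carrier) : Tm (Unit ⊕ A.carrier) := .app (.of (.inr a)) (xTm A)

lemma pe_ofApp (a b : A.carrier) (t : Tm (Unit ⊕ A.carrier)) :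
    PolyEq A Unit (.app (.of (.inr (A.app a b))) t)
      (.app (.app (.of (.inr a)) (.of (.inr b))) t) :=
  PolyEq.congr (PolyEq.symm (PolyEq.inj a b)) (PolyEq.refl t)

lemma fTm_op1 (a b : A.carrier) :
    PolyEq A Unit (fTm A (op1 A a b)) (.app (fTm A a) (fTm A b)) := by
  have h1 : PolyEq A Unit (fTm A (op1 A a b))
      (.app (.app (.app (.of (.inr A.s)) (.of (.inr a))) (.of (.inr b))) (xTm A)) := by
    refine PolyEq.trans (pe_ofApp A _ b (xTm A)) ?_
    exact PolyEq.congr (PolyEq.congr (PolyEq.symm (PolyEq.inj A.s a)) (PolyEq.refl _))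
      (PolyEq.refl _)
  exact PolyEq.trans h1 (PolyEq.sEq _ _ _)

lemma fTm_const (a : A.carrier) :
    PolyEq A Unit (fTm A (A.app A.k a)) (.of (.inr a)) :=
  PolyEq.trans (pe_ofApp A A.k a (xTm A)) (PolyEq.kEq _ _)

lemma fTm_sound {a b : A.carrier} (h : Sim1 A a b) :
    PolyEq A Unit (fTm A a) (fTm A b) := by
  induction h with
  | kEq a b =>
      refine PolyEq.trans (fTm_op1 A _ _) ?_
      refine PolyEq.trans (PolyEq.congr (fTm_op1 A _ _) (PolyEq.refl _)) ?_
      refine PolyEq.trans (PolyEq.congr (PolyEq.congr (fTm_const A A.k) (PolyEq.refl _))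
        (PolyEq.refl _)) ?_
      exact PolyEq.kEq _ _
  | sEq a b c =>
      refine PolyEq.trans (fTm_op1 A _ _) ?_
      refine PolyEq.trans (PolyEq.congr (fTm_op1 A _ _) (PolyEq.refl _)) ?_
      refine PolyEq.trans (PolyEq.congr (PolyEq.congr (fTm_op1 A _ _) (PolyEq.refl _))
        (PolyEq.refl _)) ?_
      refine PolyEq.trans (PolyEq.congr (PolyEq.congr
        (PolyEq.congr (fTm_const A A.s) (PolyEq.refl _)) (PolyEq.refl _)) (PolyEq.refl _)) ?_
      refine PolyEq.trans (PolyEq.sEq _ _ _) ?_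
      exact PolyEq.symm (PolyEq.trans (fTm_op1 A _ _)
        (PolyEq.congr (fTm_op1 A _ _) (fTm_op1 A _ _)))
  | iEq a =>
      refine PolyEq.trans (fTm_op1 A _ _) ?_
      refine PolyEq.trans (PolyEq.congr (fTm_const A A.i) (PolyEq.refl _)) ?_
      exact PolyEq.iEq _
  | eEq a b =>
      refine PolyEq.trans (fTm_op1 A _ _) ?_
      refine PolyEq.trans (PolyEq.congr (fTm_op1 A _ _) (PolyEq.refl _)) ?_
      refine PolyEq.trans (PolyEq.congr (PolyEq.congr (fTm_const A A.e) (PolyEq.refl _))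
        (PolyEq.refl _)) ?_
      refine PolyEq.trans (PolyEq.eEq _ _) ?_
      exact PolyEq.symm (fTm_op1 A _ _)
  | inj a b =>
      refine PolyEq.trans (fTm_op1 A _ _) ?_
      refine PolyEq.trans (PolyEq.congr (fTm_const A a) (fTm_const A b)) ?_
      refine PolyEq.trans (PolyEq.inj a b) ?_
      exact PolyEq.symm (fTm_const A _)
  | eta a =>
      refine PolyEq.trans (fTm_op1 A _ _) ?_
      refine PolyEq.trans (PolyEq.congr (fTm_const A a) (PolyEq.refl _)) ?_
      exact PolyEq.congr (PolyEq.refl _) (PolyEq.iEq _)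
  | refl a => exact PolyEq.refl _
  | symm _ ih => exact PolyEq.symm ih
  | trans _ _ ih1 ih2 => exact PolyEq.trans ih1 ih2
  | congr _ _ ih1 ih2 =>
      refine PolyEq.trans (fTm_op1 A _ _) ?_
      refine PolyEq.trans (PolyEq.congr ih1 ih2) ?_
      exact PolyEq.symm (fTm_op1 A _ _)

/-- The inverse on terms: substitute `i` for the variable and `k a` for constants. -/
def gTm : Tm (Unit ⊕ A.carrier) → A.carrier
  | .of (.inl _) => A.i
  | .of (.inr a) => A.app A.k a
  | .app t u => op1 A (gTm t) (gTm u)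

lemma gTm_sound {t u : Tm (Unit ⊕ A.carrier)} (h : PolyEq A Unit t u) :
    Sim1 A (gTm A t) (gTm A u) := by
  induction h with
  | kEq t u => exact Sim1.kEq _ _
  | sEq t u v => exact Sim1.sEq _ _ _
  | iEq t => exact Sim1.iEq _
  | eEq t u => exact Sim1.eEq _ _
  | inj a b => exact Sim1.inj a b
  | refl t => exact Sim1.refl _
  | symm _ ih => exact ih.symm
  | trans _ _ ih1 ih2 => exact ih1.trans ih2
  | congr _ _ ih1 ih2 => exact ih1.congr ih2

lemma gTm_fTm (a : A.carrier) : Sim1 A (gTm A (fTm A a)) a := Sim1.eta a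

lemma fTm_gTm (t : Tm (Unit ⊕ A.carrier)) :
    PolyEq A Unit (fTm A (gTm A t)) t := by
  induction t with
  | of v =>
      cases v with
      | inl v =>
          cases v
          exact PolyEq.iEq _
      | inr a => exact fTm_const A a
  | app t u iht ihu =>
      refine PolyEq.trans (fTm_op1 A _ _) ?_
      exact PolyEq.congr iht ihu

end Aux

def fHom (A : CPM) : CPMHom (barA1 A) (polyAlg A Unit) where
  toFun := Quot.lift (fun a => Quot.mk _ (fTm A a))
    (fun _ _ h => Quot.sound (fTm_sound A h))
  map_app := by
    intro a b
    induction a using Quot.ind with | _ x =>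
    induction b using Quot.ind with | _ y =>
    exact Quot.sound (fTm_op1 A x y)
  map_k := Quot.sound (fTm_const A A.k)
  map_s := Quot.sound (fTm_const A A.s)
  map_i := Quot.sound (fTm_const A A.i)
  map_e := Quot.sound (fTm_const A A.e)

def gFun (A : CPM) : (polyAlg A Unit).carrier → (barA1 A).carrier :=
  Quot.lift (fun t => Quot.mk _ (gTm A t)) (fun _ _ h => Quot.sound (gTm_sound A h))

/-- `Ā₁` is isomorphic to `A[x]`. -/
theorem barA1_iso_polyAlg_one (A : CPM) :
    ∃ f : CPMHom (barA1 A) (polyAlg A Unit), Function.Bijective f.toFun := by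
  refine ⟨fHom A, ?_⟩
  rw [Function.bijective_iff_has_inverse]
  refine ⟨gFun A, ?_, ?_⟩
  · intro a
    induction a using Quot.ind with | _ x =>
    have h1 : (fHom A).toFun (Quot.mk (Sim1 A) x) = Quot.mk (PolyEq A Unit) (fTm A x) := rfl
    have h2 : gFun A (Quot.mk (PolyEq A Unit) (fTm A x))
        = Quot.mk (Sim1 A) (gTm A (fTm A x)) := rfl
    rw [h1, h2]
    exact Quot.sound (gTm_fTm A x)
  · intro t
    induction t using Quot.ind with | _ u =>
    have h1 : gFun A (Quot.mk (PolyEq A Unit) u) = Quot.mk (Sim1 A) (gTm A u) := rfl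
    have h2 : (fHom A).toFun (Quot.mk (Sim1 A) (gTm A u))
        = Quot.mk (PolyEq A Unit) (fTm A (gTm A u)) := rfl
    rw [h1, h2]
    exact Quot.sound (fTm_gTm A u)
end

section
/- For any combinatory pre-model A and elements a, b of A, a ~₁ b if and only if a·x equals b·x in the polynomial algebra A[x]. -/
namespace Sim1PolyAux

variable (A : CPM)

/-- The indeterminate term. -/
def X : Tm (Unit ⊕ A.carrier) := .of (.inl ())

/-- Embedded constant term. -/
def em (a : A.carrier) : Tm (Unit ⊕ A.carrier) := .of (.inr a)

lemma kx (a : A.carrier) :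
    PolyEq A Unit (.app (em A (A.app A.k a)) (X A)) (em A a) :=
  .trans (.congr (.symm (.inj A.k a)) (.refl _)) (.kEq _ _)

lemma opx (a b : A.carrier) :
    PolyEq A Unit (.app (em A (op1 A a b)) (X A))
      (.app (.app (em A a) (X A)) (.app (em A b) (X A))) :=
  .trans (.congr (.trans (.symm (.inj (A.app A.s a) b))
      (.congr (.symm (.inj A.s a)) (.refl _))) (.refl _)) (.sEq _ _ _)

lemma sim1_to_poly {a b : A.carrier} (h : Sim1 A a b) :
    PolyEq A Unit (.app (em A a) (X A)) (.app (em A b) (X A)) := by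
  induction h with
  | kEq a b =>
      exact .trans (opx A _ _) (.trans (.congr (.trans (opx A _ _)
        (.congr (kx A _) (.refl _))) (.refl _)) (.kEq _ _))
  | sEq a b c =>
      refine .trans (opx A _ _) (.trans (.congr (.trans (opx A _ _)
        (.congr (.trans (opx A _ _) (.congr (kx A _) (.refl _))) (.refl _)))
        (.refl _)) (.trans (.sEq _ _ _) ?_))
      exact .symm (.trans (opx A _ _) (.congr (opx A _ _) (opx A _ _)))
  | iEq a =>
      exact .trans (opx A _ _) (.trans (.congr (kx A _) (.refl _)) (.iEq _))
  | eEq a b =>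
      refine .trans (opx A _ _) (.trans (.congr (.trans (opx A _ _)
        (.congr (kx A _) (.refl _))) (.refl _)) (.trans (.eEq _ _) ?_))
      exact .symm (opx A _ _)
  | inj a b =>
      exact .trans (opx A _ _) (.trans (.congr (kx A _) (kx A _))
        (.trans (.inj a b) (.symm (kx A _))))
  | eta a =>
      exact .trans (opx A _ _) (.congr (kx A _) (.iEq _))
  | refl a => exact .refl _
  | symm _ ih => exact .symm ih
  | trans _ _ ih1 ih2 => exact .trans ih1 ih2
  | congr _ _ ih1 ih2 =>
      exact .trans (opx A _ _) (.trans (.congr ih1 ih2) (.symm (opx A _ _)))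

/-- Bracket-abstraction interpretation of a polynomial term back in `A`. -/
def F : Tm (Unit ⊕ A.carrier) → A.carrier
  | .of (.inl _) => A.i
  | .of (.inr c) => A.app A.k c
  | .app t u => op1 A (F t) (F u)

lemma poly_to_sim {t u} (h : PolyEq A Unit t u) : Sim1 A (F A t) (F A u) := by
  induction h with
  | kEq t u => exact .kEq _ _
  | sEq t u v => exact .sEq _ _ _
  | iEq t => exact .iEq _
  | eEq t u => exact .eEq _ _
  | inj a b => exact .inj a b
  | refl t => exact .refl _
  | symm _ ih => exact .symm ih
  | trans _ _ ih1 ih2 => exact .trans ih1 ih2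
  | congr _ _ ih1 ih2 => exact .congr ih1 ih2

lemma eqvGen_to_poly {t u} (h : Relation.EqvGen (PolyEq A Unit) t u) : PolyEq A Unit t u := by
  induction h with
  | rel _ _ h => exact h
  | refl t => exact .refl t
  | symm _ _ _ ih => exact .symm ih
  | trans _ _ _ _ _ ih1 ih2 => exact .trans ih1 ih2

end Sim1PolyAux

/-- `a ~₁ b` iff `a·x = b·x` in `A[x]`. -/
theorem sim1_iff_polyEq (A : CPM) (a b : A.carrier) :
    Sim1 A a b ↔
      Quot.mk (PolyEq A Unit) (.app (.of (.inr a)) (.of (.inl ()))) =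
        Quot.mk (PolyEq A Unit) (.app (.of (.inr b)) (.of (.inl ()))) := by
  constructor
  · intro h
    exact Quot.sound (Sim1PolyAux.sim1_to_poly A h)
  · intro h
    have h2 := Sim1PolyAux.eqvGen_to_poly A (Quot.eqvGen_exact h)
    have h3 := Sim1PolyAux.poly_to_sim A h2
    exact (Sim1.eta a).symm.trans (h3.trans (Sim1.eta b))
end

section
/- For any combinatory pre-model A and any element a, we have e·a ~₁ a, where ~₁ is the congruence of Definition quotient1. -/
/-- `e·a ~₁ a` for every `a`. -/
theorem eApp_sim1_self (A : CPM) (a : A.carrier) :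
    Sim1 A (A.app A.e a) a := by
  have h1 : Sim1 A (A.app A.e a) (op1 A (A.app A.k (A.app A.e a)) A.i) :=
    Sim1.symm (Sim1.eta _)
  have h2 : Sim1 A (op1 A (A.app A.k (A.app A.e a)) A.i)
      (op1 A (op1 A (A.app A.k A.e) (A.app A.k a)) A.i) :=
    Sim1.congr (Sim1.symm (Sim1.inj _ _)) (Sim1.refl _)
  have h3 : Sim1 A (op1 A (op1 A (A.app A.k A.e) (A.app A.k a)) A.i)
      (op1 A (A.app A.k a) A.i) := Sim1.eEq _ _
  exact (h1.trans h2).trans (h3.trans (Sim1.eta _))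
end

section
/- A combinatory pre-model A is reflexive (i.e., a ~₁ b implies ea = eb) if and only if it satisfies the seven universal equations: (1) e((kk)·₁a·₁b) = ea; (2) e((ks)·₁a·₁b·₁c) = e(a·₁c·₁(b·₁c)); (3) e((ki)·₁a) = ea; (4) e((ke)·₁a·₁b) = e(a·₁b); (5) e((ka)·₁(kb)) = e(k(ab)); (6) e((ka)·₁i) = ea; (7) e((ea)·₁(eb)) = e(a·₁b), for all a, b, c in A. -/
/-- reflexivity is characterised by seven universal equations. -/
theorem reflexive_iff_seven_equations (A : CPM) :
    Reflexive1 A ↔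
      ((∀ a b, A.app A.e (op1 A (op1 A (A.app A.k A.k) a) b) = A.app A.e a) ∧
       (∀ a b c, A.app A.e (op1 A (op1 A (op1 A (A.app A.k A.s) a) b) c) =
          A.app A.e (op1 A (op1 A a c) (op1 A b c))) ∧
       (∀ a, A.app A.e (op1 A (A.app A.k A.i) a) = A.app A.e a) ∧
       (∀ a b, A.app A.e (op1 A (op1 A (A.app A.k A.e) a) b) =
          A.app A.e (op1 A a b)) ∧
       (∀ a b, A.app A.e (op1 A (A.app A.k a) (A.app A.k b)) =
          A.app A.e (A.app A.k (A.app a b))) ∧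
       (∀ a, A.app A.e (op1 A (A.app A.k a) A.i) = A.app A.e a) ∧
       (∀ a b, A.app A.e (op1 A (A.app A.e a) (A.app A.e b)) =
          A.app A.e (op1 A a b))) := by
  have ea_sim : ∀ a, Sim1 A (A.app A.e a) a := by
    intro a
    have h1 : Sim1 A (op1 A (op1 A (A.app A.k A.e) (A.app A.k a)) A.i)
        (A.app A.e a) :=
      .trans (.congr (.inj A.e a) (.refl A.i)) (.eta (A.app A.e a))
    have h2 : Sim1 A (op1 A (op1 A (A.app A.k A.e) (A.app A.k a)) A.i) a :=
      .trans (.eEq (A.app A.k a) A.i) (.eta a)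
    exact .trans (.symm h1) h2
  constructor
  · intro hR
    refine ⟨fun a b => hR _ _ (.kEq a b), fun a b c => hR _ _ (.sEq a b c),
      fun a => hR _ _ (.iEq a), fun a b => hR _ _ (.eEq a b),
      fun a b => hR _ _ (.inj a b), fun a => hR _ _ (.eta a),
      fun a b => hR _ _ (.congr (ea_sim a) (ea_sim b))⟩
  · rintro ⟨h1, h2, h3, h4, h5, h6, h7⟩ a b hab
    induction hab with
    | kEq a b => exact h1 a b
    | sEq a b c => exact h2 a b c
    | iEq a => exact h3 a
    | eEq a b => exact h4 a b
    | inj a b => exact h5 a b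
    | eta a => exact h6 a
    | refl a => rfl
    | symm _ ih => exact ih.symm
    | trans _ _ ih1 ih2 => exact ih1.trans ih2
    | @congr a a' b b' _ _ ih1 ih2 =>
      calc A.app A.e (op1 A a b) = A.app A.e (op1 A (A.app A.e a) (A.app A.e b)) :=
            (h7 a b).symm
        _ = A.app A.e (op1 A (A.app A.e a') (A.app A.e b')) := by rw [ih1, ih2]
        _ = A.app A.e (op1 A a' b') := h7 a' b'
end

section
/- A combinatory pre-model A is reflexive if and only if for all terms t, u over {x} + A, t = u in A[x] implies λ†x.t = λ†x.u (as elements of A). -/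
/-- Reflexivity stated via the polynomial algebra: `a·x = b·x` in `A[x]`
implies `e a = e b`. -/
def ReflexiveP (A : CPM) : Prop :=
  ∀ a b : A.carrier,
    Quot.mk (PolyEq A Unit) (.app (.of (.inr a)) (.of (.inl ()))) =
      Quot.mk (PolyEq A Unit) (.app (.of (.inr b)) (.of (.inl ()))) →
    A.app A.e a = A.app A.e b

/-- The Meyer–Scott axiom. -/
def MeyerScott (A : CPM) : Prop :=
  ∀ a b, (∀ c, A.app a c = A.app b c) → A.app A.e a = A.app A.e b

/-- Strong reflexivity: the polynomial algebra `A[x]` is reflexive. -/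
def StronglyReflexive (A : CPM) : Prop := ReflexiveP (polyAlg A Unit)

/-- The standard bracket abstraction `λ*x.t` (element of `A`). -/
def lamAstE (A : CPM) : Tm (Unit ⊕ A.carrier) → A.carrier
  | .of (.inl _) => A.i
  | .of (.inr a) => A.app A.k a
  | .app t u => A.app (A.app A.s (lamAstE A t)) (lamAstE A u)

/-- The alternative abstraction `λ†x.t` (element of `A`). -/
def lamDagE (A : CPM) : Tm (Unit ⊕ A.carrier) → A.carrier
  | .of (.inl _) => A.app A.e A.i
  | .of (.inr a) => A.app A.e (A.app A.k a)
  | .app (.of (.inr a)) (.of (.inl _)) => A.app A.e a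
  | .app t u => A.app A.e (A.app (A.app A.s (lamDagE A t)) (lamDagE A u))


namespace LamDagAux

variable {A : CPM}

local notation "emb" a => Tm.of (Sum.inr a)
local notation "X" => Tm.of (Sum.inl ())

/-- `(e·a)·c ≈ a·c` in `A[x]`. -/
theorem eapp (a : A.carrier) (c : Tm (Unit ⊕ A.carrier)) :
    PolyEq A Unit (.app (emb (A.app A.e a)) c) (.app (emb a) c) :=
  .trans (.congr (.symm (.inj A.e a)) (.refl c)) (.eEq _ _)

/-- Generic step for the app case. -/
theorem step {t u : Tm (Unit ⊕ A.carrier)} {lt lu : A.carrier}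
    (h1 : PolyEq A Unit (.app (emb lt) X) t)
    (h2 : PolyEq A Unit (.app (emb lu) X) u) :
    PolyEq A Unit (.app (emb (A.app A.e (A.app (A.app A.s lt) lu))) X)
      (.app t u) := by
  refine .trans (eapp _ _) (.trans ?_ (.trans (.sEq _ _ _) (.congr h1 h2)))
  exact .congr (.symm (.trans (.congr (.inj A.s lt) (.refl _)) (.inj _ lu)))
    (.refl _)

/-- `(λ†x.t)·x ≈ t` in `A[x]`. -/
theorem beta : ∀ t : Tm (Unit ⊕ A.carrier),
    PolyEq A Unit (.app (emb (lamDagE A t)) X) t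
  | .of (.inl ()) =>
      .trans (eapp _ _) (.iEq _)
  | .of (.inr a) =>
      .trans (eapp _ _)
        (.trans (.congr (.symm (.inj A.k a)) (.refl _)) (.kEq _ _))
  | .app (.of (.inr a)) (.of (.inl ())) => eapp a X
  | .app (.of (.inl ())) u => step (beta _) (beta u)
  | .app (.of (.inr a)) (.of (.inr b)) => step (beta _) (beta _)
  | .app (.of (.inr a)) (.app u v) => step (beta _) (beta _)
  | .app (.app t t') u => step (beta _) (beta u)

/-- Every `λ†x.t` has the form `e·m`. -/
theorem exists_e : ∀ t : Tm (Unit ⊕ A.carrier),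
    ∃ m, lamDagE A t = A.app A.e m
  | .of (.inl ()) => ⟨_, rfl⟩
  | .of (.inr a) => ⟨_, rfl⟩
  | .app (.of (.inr a)) (.of (.inl ())) => ⟨a, rfl⟩
  | .app (.of (.inl ())) u => ⟨_, rfl⟩
  | .app (.of (.inr a)) (.of (.inr b)) => ⟨_, rfl⟩
  | .app (.of (.inr a)) (.app u v) => ⟨_, rfl⟩
  | .app (.app t t') u => ⟨_, rfl⟩

end LamDagAux

/-- `A` is reflexive iff `λ†x` is well-defined on `A[x]`. -/
theorem reflexive_iff_lamDag_well_defined (A : CPM) :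
    ReflexiveP A ↔
      ∀ t u : Tm (Unit ⊕ A.carrier),
        Quot.mk (PolyEq A Unit) t = Quot.mk (PolyEq A Unit) u →
        lamDagE A t = lamDagE A u := by
  constructor
  · intro hR t u h
    have key : A.app A.e (lamDagE A t) = A.app A.e (lamDagE A u) := by
      apply hR
      calc Quot.mk (PolyEq A Unit) (.app (.of (.inr (lamDagE A t))) (.of (.inl ())))
          = Quot.mk (PolyEq A Unit) t := Quot.sound (LamDagAux.beta t)
        _ = Quot.mk (PolyEq A Unit) u := h
        _ = _ := (Quot.sound (LamDagAux.beta u)).symm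
    have ee : ∀ a : A.carrier, A.app A.e (A.app A.e a) = A.app A.e a := fun a =>
      hR (A.app A.e a) a (Quot.sound (LamDagAux.eapp a _))
    obtain ⟨m, hm⟩ := LamDagAux.exists_e (A := A) t
    obtain ⟨n, hn⟩ := LamDagAux.exists_e (A := A) u
    rw [hm, hn]
    rw [hm, hn, ee, ee] at key
    exact key
  · intro h a b hab
    exact h (.app (.of (.inr a)) (.of (.inl ())))
      (.app (.of (.inr b)) (.of (.inl ()))) hab
end

section
/- Every combinatory model (a combinatory pre-model satisfying the Meyer–Scott axiom: if ac = bc for all c, then ea = eb) is strongly reflexive, i.e., its polynomial algebra A[x] is reflexive. -/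
/-- Evaluation of terms in a CPM, substituting `ρ` for variables. -/
def evalTm (B : CPM) {V : Type} (ρ : V → B.carrier) : Tm (V ⊕ B.carrier) → B.carrier
  | .of (.inl v) => ρ v
  | .of (.inr c) => c
  | .app t u => B.app (evalTm B ρ t) (evalTm B ρ u)

theorem evalTm_sound (B : CPM) {V : Type} (ρ : V → B.carrier) {t u : Tm (V ⊕ B.carrier)}
    (hpe : PolyEq B V t u) : evalTm B ρ t = evalTm B ρ u := by
  induction hpe with
  | kEq t u => exact B.k_ax _ _
  | sEq t u v => exact B.s_ax _ _ _
  | iEq t => exact B.i_ax _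
  | eEq t u => exact B.e_ax _ _
  | inj a b => rfl
  | refl t => rfl
  | symm _ ih => exact ih.symm
  | trans _ _ ih1 ih2 => exact ih1.trans ih2
  | congr _ _ ih1 ih2 => exact congrArg₂ B.app ih1 ih2

/-- Evaluation on the quotient. -/
def evalQ (B : CPM) {V : Type} (ρ : V → B.carrier) : Quot (PolyEq B V) → B.carrier :=
  Quot.lift (evalTm B ρ) (fun _ _ hpe => evalTm_sound B ρ hpe)

/-- Bracket abstraction (over the single variable). -/
def lam (A : CPM) : Tm (Unit ⊕ A.carrier) → A.carrier
  | .of (.inl _) => A.i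
  | .of (.inr c) => A.app A.k c
  | .app t u => A.app (A.app A.s (lam A t)) (lam A u)

theorem lam_beta (A : CPM) (t : Tm (Unit ⊕ A.carrier)) (d : A.carrier) :
    A.app (lam A t) d = evalTm A (fun _ => d) t := by
  induction t with
  | of v =>
    cases v with
    | inl v => exact A.i_ax d
    | inr c => exact A.k_ax c d
  | app p q ihp ihq =>
    show A.app (A.app (A.app A.s (lam A p)) (lam A q)) d = _
    rw [A.s_ax, ihp, ihq]
    rfl

theorem lam_beta_x (A : CPM) (t : Tm (Unit ⊕ A.carrier)) :
    PolyEq A Unit (.app (.of (.inr (lam A t))) (.of (.inl ()))) t := by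
  induction t with
  | of v =>
    cases v with
    | inl v => exact PolyEq.iEq _
    | inr c =>
      exact .trans (.congr (.symm (PolyEq.inj A.k c)) (.refl _)) (PolyEq.kEq _ _)
  | app p q ihp ihq =>
    have h1 : PolyEq A Unit
        (.app (.app (.app (.of (.inr A.s)) (.of (.inr (lam A p)))) (.of (.inr (lam A q))))
          (.of (.inl ())))
        (.app (.of (.inr (lam A (Tm.app p q)))) (.of (.inl ()))) := by
      refine .congr ?_ (.refl _)
      exact .trans (.congr (PolyEq.inj A.s (lam A p)) (.refl _)) (PolyEq.inj _ (lam A q))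
    exact .trans (.symm h1) (.trans (PolyEq.sEq _ _ _) (.congr ihp ihq))

/-- every combinatory model is strongly reflexive. -/
theorem stronglyReflexive_of_meyerScott (A : CPM) (h : MeyerScott A) :
    StronglyReflexive A := by
  intro a b hyp
  induction a using Quot.ind with | _ t =>
  induction b using Quot.ind with | _ u =>
  -- Step 1: pointwise equality in A[x]
  have h1 : ∀ c : (polyAlg A Unit).carrier,
      (polyAlg A Unit).app (Quot.mk _ t) c = (polyAlg A Unit).app (Quot.mk _ u) c :=
    fun c => congrArg (evalQ (polyAlg A Unit) (fun _ => c)) hyp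
  -- Step 2: pointwise equality in A after evaluating x
  have h2 : ∀ c d : A.carrier,
      A.app (evalTm A (fun _ => d) t) c = A.app (evalTm A (fun _ => d) u) c := by
    intro c d
    exact congrArg (evalQ A (fun _ => d)) (h1 (Quot.mk _ (.of (.inr c))))
  -- Step 3: Meyer–Scott in A
  have h3 : ∀ d : A.carrier,
      A.app A.e (evalTm A (fun _ => d) t) = A.app A.e (evalTm A (fun _ => d) u) :=
    fun d => h _ _ (fun c => h2 c d)
  -- Step 4: abstract
  set p := lam A (.app (.of (.inr A.e)) t) with hp
  set q := lam A (.app (.of (.inr A.e)) u) with hq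
  have h4 : ∀ d, A.app p d = A.app q d := by
    intro d
    rw [hp, hq, lam_beta, lam_beta]
    exact h3 d
  have h5 : A.app A.e p = A.app A.e q := h _ _ h4
  -- Step 5: syntactic chain in A[x]
  show Quot.mk (PolyEq A Unit) (.app (.of (.inr A.e)) t) =
       Quot.mk (PolyEq A Unit) (.app (.of (.inr A.e)) u)
  have chain : ∀ (v : Tm (Unit ⊕ A.carrier)),
      PolyEq A Unit (.app (.of (.inr A.e)) v)
        (.app (.of (.inr (A.app A.e (lam A (.app (.of (.inr A.e)) v))))) (.of (.inl ()))) := by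
    intro v
    refine .trans (.symm (lam_beta_x A (.app (.of (.inr A.e)) v))) ?_
    refine .trans (.symm (PolyEq.eEq _ _)) ?_
    exact .congr (PolyEq.inj A.e _) (.refl _)
  refine Quot.sound (.trans (chain t) (.trans ?_ (.symm (chain u))))
  rw [← hp, ← hq, h5]
  exact .refl _
end

section
/- For a combinatory pre-model A, the following are equivalent: (1) A is strongly reflexive; (2) A[X] is strongly reflexive; (3) A[X] is reflexive; (4) A[X] is a combinatory model (satisfies the Meyer–Scott axiom). -/
/-!
Every element of `A[ℕ]` involves only finitely many indeterminates `x₀, …, x_{n-1}`, and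
these can be packed into one: with the nested pairs `T = ⟨x₀, …, x_{n-1}⟩` and closed
projections `πᵢ` with `T πᵢ = xᵢ`, the substitutions `xᵢ ↦ x πᵢ` and `x ↦ T` exhibit that part
of `A[ℕ]` as a retract of `A[x]`. Reflexivity passes to retracts, so `A[x]` reflexive gives
`A[ℕ]` reflexive, and conversely `A[x]` is a retract of `A[ℕ]`. Since `A[ℕ][x] ≅ A[ℕ]`, this
also identifies strong reflexivity of `A[ℕ]` with its reflexivity. Finally the Meyer–Scott
axiom in `A[ℕ]` follows from reflexivity by substituting `x` for an indeterminate that occurs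
in neither of the two elements, and implies reflexivity of any pre-model by evaluating `x`.
-/

def CPMHom.id (A : CPM) : CPMHom A A := ⟨fun a => a, fun _ _ => rfl, rfl, rfl, rfl, rfl⟩

def CPMHom.comp {A B C : CPM} (g : CPMHom B C) (h : CPMHom A B) : CPMHom A C where
  toFun a := g.toFun (h.toFun a)
  map_app a b := (congrArg g.toFun (h.map_app a b)).trans (g.map_app _ _)
  map_k := (congrArg g.toFun h.map_k).trans g.map_k
  map_s := (congrArg g.toFun h.map_s).trans g.map_s
  map_i := (congrArg g.toFun h.map_i).trans g.map_i
  map_e := (congrArg g.toFun h.map_e).trans g.map_e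

namespace CPM

variable (B : CPM)

def pair (p q : B.carrier) : B.carrier :=
  B.app (B.app B.s (B.app (B.app B.s B.i) (B.app B.k p))) (B.app B.k q)

theorem pair_app (p q c : B.carrier) : B.app (B.pair p q) c = B.app (B.app c p) q := by
  simp only [pair, B.s_ax, B.i_ax, B.k_ax]

def skip (π : B.carrier) : B.carrier :=
  B.app (B.app B.s (B.app B.k B.k)) (B.app (B.app B.s B.i) (B.app B.k π))

theorem skip_app_app (π p q : B.carrier) : B.app (B.app (B.skip π) p) q = B.app p π := by
  simp only [skip, B.s_ax, B.i_ax, B.k_ax]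

def tuple (f : ℕ → B.carrier) : ℕ → B.carrier
  | 0 => B.i
  | n + 1 => B.pair (tuple f n) (f n)

/-- Projection onto the `i`-th component of a `tuple f n` (junk for `n ≤ i`). -/
def proj : ℕ → ℕ → B.carrier
  | 0, _ => B.i
  | n + 1, i => if i = n then B.app B.k B.i else B.skip (proj n i)

theorem tuple_app_proj (f : ℕ → B.carrier) {n i : ℕ} (hi : i < n) :
    B.app (B.tuple f n) (B.proj n i) = f i := by
  induction n with
  | zero => omega
  | succ n ih =>
    rw [tuple, pair_app, proj]
    split_ifs with hin
    · rw [B.k_ax, B.i_ax, hin]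
    · rw [skip_app_app, ih (by omega)]

end CPM

theorem CPMHom.map_proj {B C : CPM} (h : CPMHom B C) (n i : ℕ) :
    h.toFun (B.proj n i) = C.proj n i := by
  induction n with
  | zero => exact h.map_i
  | succ n ih =>
    simp only [CPM.proj, apply_ite h.toFun, CPM.skip, h.map_app, h.map_s, h.map_k, h.map_i, ih]

def Tm.eval (B : CPM) {S : Type} (φ : S → B.carrier) : Tm S → B.carrier
  | .of s => φ s
  | .app t u => B.app (t.eval B φ) (u.eval B φ)

theorem Tm.eval_eq_of_polyEq {A B : CPM} {V : Type} (h : CPMHom A B) (val : V → B.carrier)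
    {t u : Tm (V ⊕ A.carrier)} (htu : PolyEq A V t u) :
    t.eval B (Sum.elim val h.toFun) = u.eval B (Sum.elim val h.toFun) := by
  induction htu with
  | kEq => simp only [Tm.eval, Sum.elim_inr, h.map_k, B.k_ax]
  | sEq => simp only [Tm.eval, Sum.elim_inr, h.map_s, B.s_ax]
  | iEq => simp only [Tm.eval, Sum.elim_inr, h.map_i, B.i_ax]
  | eEq => simp only [Tm.eval, Sum.elim_inr, h.map_e, B.e_ax]
  | inj a b => exact (h.map_app a b).symm
  | refl => rfl
  | symm _ ih => exact ih.symm
  | trans _ _ ih₁ ih₂ => exact ih₁.trans ih₂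
  | congr _ _ ih₁ ih₂ => simp only [Tm.eval, ih₁, ih₂]

section PolyAlg

variable {A B : CPM} {V W : Type}

def polyLift (h : CPMHom A B) (val : V → B.carrier) : CPMHom (polyAlg A V) B where
  toFun := Quot.lift (Tm.eval B (Sum.elim val h.toFun)) fun _ _ => Tm.eval_eq_of_polyEq h val
  map_app a b := by
    induction a using Quot.ind
    induction b using Quot.ind
    rfl
  map_k := h.map_k
  map_s := h.map_s
  map_i := h.map_i
  map_e := h.map_e

def polyMap (h : CPMHom A B) : CPMHom (polyAlg A V) (polyAlg B V) :=
  polyLift ((eta B V).comp h) (xvar B V)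

def rename (f : V → W) : CPMHom (polyAlg A V) (polyAlg A W) :=
  polyLift (eta A W) fun v => xvar A W (f v)

variable (A) in
inductive Supported (s : Set V) : (polyAlg A V).carrier → Prop
  | const (a : A.carrier) : Supported s ((eta A V).toFun a)
  | var {v : V} : v ∈ s → Supported s (xvar A V v)
  | app {p q} : Supported s p → Supported s q → Supported s ((polyAlg A V).app p q)

theorem Supported.mono {s t : Set V} (hst : s ⊆ t) {q : (polyAlg A V).carrier}
    (hq : Supported A s q) : Supported A t q := by
  induction hq with
  | const a => exact .const a
  | var hv => exact .var (hst hv)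
  | app _ _ ihp ihq => exact .app ihp ihq

theorem supported_univ (q : (polyAlg A V).carrier) : Supported A Set.univ q := by
  induction q using Quot.ind with | _ t =>
  induction t with
  | of x =>
    cases x with
    | inl v => exact .var (Set.mem_univ v)
    | inr a => exact .const a
  | app t u iht ihu => exact .app iht ihu

theorem exists_supported_Iio (q : (polyAlg A ℕ).carrier) : ∃ n, Supported A (Set.Iio n) q := by
  induction supported_univ q with
  | const a => exact ⟨0, .const a⟩
  | @var v _ => exact ⟨v + 1, .var (Nat.lt_succ_self v)⟩
  | app _ _ ihp ihq =>
    obtain ⟨n, hp⟩ := ihp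
    obtain ⟨m, hq⟩ := ihq
    exact ⟨max n m, .app (hp.mono (Set.Iio_subset_Iio (le_max_left n m)))
      (hq.mono (Set.Iio_subset_Iio (le_max_right n m)))⟩

theorem polyAlg_hom_eqOn_supported (f g : CPMHom (polyAlg A V) B) {s : Set V}
    (h_const : ∀ a, f.toFun ((eta A V).toFun a) = g.toFun ((eta A V).toFun a))
    (h_var : ∀ v ∈ s, f.toFun (xvar A V v) = g.toFun (xvar A V v))
    {q : (polyAlg A V).carrier} (hq : Supported A s q) : f.toFun q = g.toFun q := by
  induction hq with
  | const a => exact h_const a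
  | var hv => exact h_var _ hv
  | app _ _ ihp ihq => rw [f.map_app, g.map_app, ihp, ihq]

theorem polyAlg_hom_ext (f g : CPMHom (polyAlg A V) B)
    (h_const : ∀ a, f.toFun ((eta A V).toFun a) = g.toFun ((eta A V).toFun a))
    (h_var : ∀ v, f.toFun (xvar A V v) = g.toFun (xvar A V v))
    (q : (polyAlg A V).carrier) : f.toFun q = g.toFun q :=
  polyAlg_hom_eqOn_supported f g h_const (fun v _ => h_var v) (supported_univ q)

theorem rename_rename_of_leftInverse {f : V → W} {g : W → V} (hgf : Function.LeftInverse g f)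
    (q : (polyAlg A V).carrier) : (rename g).toFun ((rename (A := A) f).toFun q) = q :=
  polyAlg_hom_ext ((rename g).comp (rename f)) (CPMHom.id _) (fun _ => rfl)
    (fun v => congrArg (xvar A V) (hgf v)) q

end PolyAlg

section NatVars

variable (A : CPM)

def extractVar : CPMHom (polyAlg A ℕ) (polyAlg (polyAlg A ℕ) Unit) :=
  polyLift ((eta (polyAlg A ℕ) Unit).comp (eta A ℕ))
    fun | 0 => xvar _ Unit () | m + 1 => (eta (polyAlg A ℕ) Unit).toFun (xvar A ℕ m)

def absorbVar : CPMHom (polyAlg (polyAlg A ℕ) Unit) (polyAlg A ℕ) :=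
  polyLift (rename Nat.succ) fun _ => xvar A ℕ 0

theorem extractVar_rename_succ (q : (polyAlg A ℕ).carrier) :
    (extractVar A).toFun ((rename Nat.succ).toFun q) = (eta (polyAlg A ℕ) Unit).toFun q :=
  polyAlg_hom_ext ((extractVar A).comp (rename Nat.succ)) (eta _ Unit) (fun _ => rfl)
    (fun _ => rfl) q

theorem absorbVar_extractVar (q : (polyAlg A ℕ).carrier) :
    (absorbVar A).toFun ((extractVar A).toFun q) = q :=
  polyAlg_hom_ext ((absorbVar A).comp (extractVar A)) (CPMHom.id _) (fun _ => rfl)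
    (fun | 0 => rfl | _ + 1 => rfl) q

theorem extractVar_absorbVar (q : (polyAlg (polyAlg A ℕ) Unit).carrier) :
    (extractVar A).toFun ((absorbVar A).toFun q) = q :=
  polyAlg_hom_ext ((extractVar A).comp (absorbVar A)) (CPMHom.id _)
    (extractVar_rename_succ A) (fun _ => rfl) q

def splitVar (n : ℕ) : CPMHom (polyAlg A ℕ) (polyAlg A Unit) :=
  polyLift (eta A Unit) fun i => (polyAlg A Unit).app (xvar A Unit ()) ((polyAlg A Unit).proj n i)

def tupleVar (n : ℕ) : CPMHom (polyAlg A Unit) (polyAlg A ℕ) :=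
  polyLift (eta A ℕ) fun _ => (polyAlg A ℕ).tuple (xvar A ℕ) n

theorem tupleVar_splitVar {n : ℕ} {q : (polyAlg A ℕ).carrier} (hq : Supported A (Set.Iio n) q) :
    (tupleVar A n).toFun ((splitVar A n).toFun q) = q := by
  refine polyAlg_hom_eqOn_supported ((tupleVar A n).comp (splitVar A n)) (CPMHom.id _)
    (fun _ => rfl) (fun i hi => ?_) hq
  change (tupleVar A n).toFun
    ((polyAlg A Unit).app (xvar A Unit ()) ((polyAlg A Unit).proj n i)) = xvar A ℕ i
  rw [(tupleVar A n).map_app, CPMHom.map_proj]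
  exact CPM.tuple_app_proj _ _ hi

def substVar (n : ℕ) : CPMHom (polyAlg A ℕ) (polyAlg (polyAlg A ℕ) Unit) :=
  polyLift ((eta (polyAlg A ℕ) Unit).comp (eta A ℕ))
    fun m => if m = n then xvar _ Unit () else (eta (polyAlg A ℕ) Unit).toFun (xvar A ℕ m)

theorem substVar_of_supported {n : ℕ} {q : (polyAlg A ℕ).carrier}
    (hq : Supported A (Set.Iio n) q) :
    (substVar A n).toFun q = (eta (polyAlg A ℕ) Unit).toFun q :=
  polyAlg_hom_eqOn_supported (substVar A n) (eta _ Unit) (fun _ => rfl)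
    (fun _ hm => if_neg (Nat.ne_of_lt hm)) hq

theorem substVar_xvar_self (n : ℕ) : (substVar A n).toFun (xvar A ℕ n) = xvar _ Unit () :=
  if_pos rfl

end NatVars

theorem ReflexiveP.app_e_eq_of_retract {B C : CPM} (hC : ReflexiveP C) (h : CPMHom B C)
    (g : CPMHom C B) {a b : B.carrier} (ha : g.toFun (h.toFun a) = a)
    (hb : g.toFun (h.toFun b) = b)
    (hab : Quot.mk (PolyEq B Unit) (.app (.of (.inr a)) (.of (.inl ()))) =
      Quot.mk (PolyEq B Unit) (.app (.of (.inr b)) (.of (.inl ())))) :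
    B.app B.e a = B.app B.e b := by
  have hCe := congrArg g.toFun (hC (h.toFun a) (h.toFun b) (congrArg (polyMap h).toFun hab))
  rwa [g.map_app, g.map_app, g.map_e, ha, hb] at hCe

theorem ReflexiveP.of_leftInverse {B C : CPM} (hC : ReflexiveP C) (h : CPMHom B C)
    (g : CPMHom C B) (hgh : ∀ x, g.toFun (h.toFun x) = x) : ReflexiveP B :=
  fun _ _ => hC.app_e_eq_of_retract h g (hgh _) (hgh _)

theorem StronglyReflexive.reflexiveP_polyAlg_nat {A : CPM} (hA : StronglyReflexive A) :
    ReflexiveP (polyAlg A ℕ) := by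
  intro a b hab
  obtain ⟨n, ha⟩ := exists_supported_Iio a
  obtain ⟨m, hb⟩ := exists_supported_Iio b
  exact hA.app_e_eq_of_retract (splitVar A (max n m)) (tupleVar A (max n m))
    (tupleVar_splitVar A (ha.mono (Set.Iio_subset_Iio (le_max_left n m))))
    (tupleVar_splitVar A (hb.mono (Set.Iio_subset_Iio (le_max_right n m)))) hab

theorem stronglyReflexive_iff_reflexiveP_polyAlg_nat (A : CPM) :
    StronglyReflexive A ↔ ReflexiveP (polyAlg A ℕ) :=
  ⟨StronglyReflexive.reflexiveP_polyAlg_nat, fun h =>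
    h.of_leftInverse (rename fun _ => 0) (rename fun _ => ()) (rename_rename_of_leftInverse
      fun _ => rfl)⟩

theorem stronglyReflexive_polyAlg_nat_iff (A : CPM) :
    StronglyReflexive (polyAlg A ℕ) ↔ ReflexiveP (polyAlg A ℕ) :=
  ⟨fun h => h.of_leftInverse (extractVar A) (absorbVar A) (absorbVar_extractVar A),
    fun h => h.of_leftInverse (absorbVar A) (extractVar A) (extractVar_absorbVar A)⟩

theorem MeyerScott.reflexiveP {B : CPM} (hB : MeyerScott B) : ReflexiveP B :=
  fun _ _ hab => hB _ _ fun c => congrArg (polyLift (CPMHom.id B) fun _ => c).toFun hab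

theorem ReflexiveP.meyerScott_polyAlg_nat {A : CPM} (hA : ReflexiveP (polyAlg A ℕ)) :
    MeyerScott (polyAlg A ℕ) := by
  intro a b hab
  obtain ⟨n, ha⟩ := exists_supported_Iio a
  obtain ⟨m, hb⟩ := exists_supported_Iio b
  set N := max n m
  have hsubst := congrArg (substVar A N).toFun (hab (xvar A ℕ N))
  rw [(substVar A N).map_app, (substVar A N).map_app,
    substVar_of_supported A (ha.mono (Set.Iio_subset_Iio (le_max_left n m))),
    substVar_of_supported A (hb.mono (Set.Iio_subset_Iio (le_max_right n m))),
    substVar_xvar_self] at hsubst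
  exact hA a b hsubst

theorem reflexiveP_polyAlg_nat_iff_meyerScott (A : CPM) :
    ReflexiveP (polyAlg A ℕ) ↔ MeyerScott (polyAlg A ℕ) :=
  ⟨ReflexiveP.meyerScott_polyAlg_nat, MeyerScott.reflexiveP⟩

/-- equivalent characterisations of strong reflexivity via
`A[X]`. -/
theorem stronglyReflexive_tfae (A : CPM) :
    (StronglyReflexive A ↔ StronglyReflexive (polyAlg A ℕ)) ∧
    (StronglyReflexive A ↔ ReflexiveP (polyAlg A ℕ)) ∧
    (StronglyReflexive A ↔ MeyerScott (polyAlg A ℕ)) := by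
  have h₁₃ := stronglyReflexive_iff_reflexiveP_polyAlg_nat A
  exact ⟨h₁₃.trans (stronglyReflexive_polyAlg_nat_iff A).symm, h₁₃,
    h₁₃.trans (reflexiveP_polyAlg_nat_iff_meyerScott A)⟩
end

section
/- A combinatory pre-model is strongly reflexive if and only if it is a retract of a combinatory model. -/
namespace SR17

/-! ### General substitution and transport along polynomial algebras -/

def subst {A B : CPM} {V W : Type} (g : V ⊕ A.carrier → Tm (W ⊕ B.carrier)) :
    Tm (V ⊕ A.carrier) → Tm (W ⊕ B.carrier)
  | .of x => g x
  | .app t u => .app (subst g t) (subst g u)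

theorem transport {A B : CPM} {V W : Type} (g : V ⊕ A.carrier → Tm (W ⊕ B.carrier))
    (hk : PolyEq B W (g (.inr A.k)) (.of (.inr B.k)))
    (hs : PolyEq B W (g (.inr A.s)) (.of (.inr B.s)))
    (hi : PolyEq B W (g (.inr A.i)) (.of (.inr B.i)))
    (he : PolyEq B W (g (.inr A.e)) (.of (.inr B.e)))
    (hinj : ∀ a b, PolyEq B W (.app (g (.inr a)) (g (.inr b))) (g (.inr (A.app a b))))
    {t u} (h : PolyEq A V t u) : PolyEq B W (subst g t) (subst g u) := by
  induction h with
  | kEq t u => exact .trans (.congr (.congr hk (.refl _)) (.refl _)) (.kEq _ _)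
  | sEq t u v => exact .trans (.congr (.congr (.congr hs (.refl _)) (.refl _)) (.refl _)) (.sEq _ _ _)
  | iEq t => exact .trans (.congr hi (.refl _)) (.iEq _)
  | eEq t u => exact .trans (.congr (.congr he (.refl _)) (.refl _)) (.eEq _ _)
  | inj a b => exact hinj a b
  | refl t => exact .refl _
  | symm _ ih => exact .symm ih
  | trans _ _ ih1 ih2 => exact .trans ih1 ih2
  | congr _ _ ih1 ih2 => exact .congr ih1 ih2

theorem quot_transport {A B : CPM} {V W : Type} (g : V ⊕ A.carrier → Tm (W ⊕ B.carrier))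
    (hk : PolyEq B W (g (.inr A.k)) (.of (.inr B.k)))
    (hs : PolyEq B W (g (.inr A.s)) (.of (.inr B.s)))
    (hi : PolyEq B W (g (.inr A.i)) (.of (.inr B.i)))
    (he : PolyEq B W (g (.inr A.e)) (.of (.inr B.e)))
    (hinj : ∀ a b, PolyEq B W (.app (g (.inr a)) (g (.inr b))) (g (.inr (A.app a b))))
    {t u} (H : Quot.mk (PolyEq A V) t = Quot.mk (PolyEq A V) u) :
    Quot.mk (PolyEq B W) (subst g t) = Quot.mk (PolyEq B W) (subst g u) :=
  congrArg (Quot.lift (fun w => Quot.mk (PolyEq B W) (subst g w))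
    (fun _ _ h => Quot.sound (transport g hk hs hi he hinj h))) H

end SR17
namespace SR17

/-! ### Pairing, tuples, selectors -/

def pairT (A : CPM) {V : Type} (a b : Tm (V ⊕ A.carrier)) : Tm (V ⊕ A.carrier) :=
  .app (.app (.of (.inr A.s))
      (.app (.app (.of (.inr A.s)) (.of (.inr A.i))) (.app (.of (.inr A.k)) a)))
    (.app (.of (.inr A.k)) b)

theorem pair_beta (A : CPM) {V : Type} (a b c : Tm (V ⊕ A.carrier)) :
    PolyEq A V (.app (pairT A a b) c) (.app (.app c a) b) :=
  .trans (.sEq _ _ _) (.trans (.congr (.sEq _ _ _) (.kEq _ _))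
    (.congr (.congr (.iEq _) (.kEq _ _)) (.refl _)))

def fstT (A : CPM) {V : Type} (z : Tm (V ⊕ A.carrier)) : Tm (V ⊕ A.carrier) :=
  .app z (.of (.inr A.k))

def sndT (A : CPM) {V : Type} (z : Tm (V ⊕ A.carrier)) : Tm (V ⊕ A.carrier) :=
  .app z (.app (.of (.inr A.k)) (.of (.inr A.i)))

theorem fst_pair (A : CPM) {V : Type} (a b : Tm (V ⊕ A.carrier)) :
    PolyEq A V (fstT A (pairT A a b)) a :=
  .trans (pair_beta A a b _) (.kEq _ _)

theorem snd_pair (A : CPM) {V : Type} (a b : Tm (V ⊕ A.carrier)) :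
    PolyEq A V (sndT A (pairT A a b)) b :=
  .trans (pair_beta A a b _) (.trans (.congr (.kEq _ _) (.refl _)) (.iEq _))

def sel (A : CPM) {V : Type} : ℕ → ℕ → Tm (V ⊕ A.carrier) → Tm (V ⊕ A.carrier)
  | 0, _, z => z
  | n+1, i, z => if i = n then sndT A z else sel A n i (fstT A z)

theorem sel_congr (A : CPM) {V : Type} (n i : ℕ) {z z' : Tm (V ⊕ A.carrier)}
    (h : PolyEq A V z z') : PolyEq A V (sel A n i z) (sel A n i z') := by
  induction n generalizing z z' with
  | zero => exact h
  | succ n ih =>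
    by_cases hc : i = n
    · simp only [sel, if_pos hc]; exact .congr h (.refl _)
    · simp only [sel, if_neg hc]; exact ih (.congr h (.refl _))

def tup (A : CPM) : ℕ → Tm (ℕ ⊕ A.carrier)
  | 0 => .of (.inr A.i)
  | n+1 => pairT A (tup A n) (.of (.inl n))

theorem sel_tup (A : CPM) (n i : ℕ) (h : i < n) :
    PolyEq A ℕ (sel A n i (tup A n)) (.of (.inl i)) := by
  induction n with
  | zero => omega
  | succ n ih =>
    by_cases hc : i = n
    · subst hc; simp only [sel, if_pos rfl, tup]; exact snd_pair A _ _
    · simp only [sel, if_neg hc, tup]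
      exact .trans (sel_congr A n i (fst_pair A _ _)) (ih (by omega))

/-! ### Variable bounds -/

def maxV {A : CPM} : Tm (ℕ ⊕ A.carrier) → ℕ
  | .of (.inl i) => i + 1
  | .of (.inr _) => 0
  | .app t u => max (maxV t) (maxV u)

def Bd {A : CPM} (n : ℕ) : Tm (ℕ ⊕ A.carrier) → Prop
  | .of (.inl i) => i < n
  | .of (.inr _) => True
  | .app t u => Bd n t ∧ Bd n u

theorem bd_maxV {A : CPM} (n : ℕ) (t : Tm (ℕ ⊕ A.carrier)) (h : maxV t ≤ n) : Bd n t := by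
  induction t with
  | of x =>
    cases x with
    | inl i => exact h
    | inr a => trivial
  | app t u iht ihu =>
    simp only [maxV, max_le_iff] at h
    exact ⟨iht h.1, ihu h.2⟩

end SR17
namespace SR17

/-! ### Forward direction: `A[ℕ]` is a combinatory model when `A` is strongly reflexive -/

/-- Variable substitution `xᵢ ↦ πᵢ(x)` collapsing `ℕ` many variables into one. -/
def g0 (A : CPM) (n : ℕ) : ℕ ⊕ A.carrier → Tm (Unit ⊕ A.carrier)
  | .inl i => sel A n i (.of (.inl ()))
  | .inr a => .of (.inr a)

/-- The map to `A[x][y]`: `xₙ ↦ y`, `xᵢ ↦ η(πᵢ(x))` for `i ≠ n`. -/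
def gmap (A : CPM) (n : ℕ) : ℕ ⊕ A.carrier → Tm (Unit ⊕ (polyAlg A Unit).carrier)
  | .inl i => if i = n then .of (.inl ())
      else .of (.inr (Quot.mk _ (sel A n i (.of (.inl ())))))
  | .inr a => .of (.inr (Quot.mk _ (.of (.inr a))))

theorem gmap_hinj (A : CPM) (n : ℕ) (a b : A.carrier) :
    PolyEq (polyAlg A Unit) Unit (.app (gmap A n (.inr a)) (gmap A n (.inr b)))
      (gmap A n (.inr (A.app a b))) := by
  have h1 := PolyEq.inj (A := polyAlg A Unit) (V := Unit)
    (Quot.mk _ (.of (.inr a))) (Quot.mk _ (.of (.inr b)))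
  have h2 : Quot.mk (PolyEq A Unit) (.app (.of (.inr a)) (.of (.inr b)))
      = Quot.mk (PolyEq A Unit) (.of (.inr (A.app a b))) := Quot.sound (.inj a b)
  simpa only [gmap, polyAlg, polyApp, h2] using h1

theorem gmap_collapse (A : CPM) (n : ℕ) {t : Tm (ℕ ⊕ A.carrier)} (h : Bd n t) :
    PolyEq (polyAlg A Unit) Unit (subst (gmap A n) t)
      (.of (.inr (Quot.mk _ (subst (g0 A n) t)))) := by
  induction t with
  | of x =>
    cases x with
    | inl i =>
      have hi : i < n := h
      simp only [subst, gmap, g0, if_neg (Nat.ne_of_lt hi)]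
      exact .refl _
    | inr a => exact .refl _
  | app t u iht ihu =>
    exact .trans (.congr (iht h.1) (ihu h.2))
      (PolyEq.inj (A := polyAlg A Unit) (Quot.mk _ (subst (g0 A n) t)) (Quot.mk _ (subst (g0 A n) u)))

/-- The back substitution `x ↦ ⟨x₀,…,x_{n-1}⟩`. -/
def hmap (A : CPM) (n : ℕ) : Unit ⊕ A.carrier → Tm (ℕ ⊕ A.carrier)
  | .inl _ => tup A n
  | .inr a => .of (.inr a)

theorem hmap_sel (A : CPM) (n m i : ℕ) (z : Tm (Unit ⊕ A.carrier)) :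
    subst (hmap A n) (sel A m i z) = sel A m i (subst (hmap A n) z) := by
  induction m generalizing z with
  | zero => rfl
  | succ m ih =>
    by_cases hc : i = m
    · simp only [sel, if_pos hc]; rfl
    · simp only [sel, if_neg hc]
      rw [ih]; rfl

theorem subst_back (A : CPM) (n : ℕ) {t : Tm (ℕ ⊕ A.carrier)} (h : Bd n t) :
    PolyEq A ℕ (subst (hmap A n) (subst (g0 A n) t)) t := by
  induction t with
  | of x =>
    cases x with
    | inl i =>
      have hi : i < n := h
      simp only [subst, g0, hmap_sel]
      exact sel_tup A n i hi
    | inr a => exact .refl _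
  | app t u iht ihu => exact .congr (iht h.1) (ihu h.2)

theorem model_of_sr (A : CPM) (SR : StronglyReflexive A) : MeyerScott (polyAlg A ℕ) := by
  intro p q H
  induction p using Quot.ind with | _ t =>
  induction q using Quot.ind with | _ u =>
  set n := max (maxV t) (maxV u) with hn
  have bt : Bd n t := bd_maxV n t (le_max_left _ _)
  have bu : Bd n u := bd_maxV n u (le_max_right _ _)
  have H1 : Quot.mk (PolyEq A ℕ) (.app t (.of (.inl n)))
      = Quot.mk (PolyEq A ℕ) (.app u (.of (.inl n))) := H (Quot.mk _ (.of (.inl n)))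
  have H2 := quot_transport (gmap A n) (.refl _) (.refl _) (.refl _) (.refl _)
    (gmap_hinj A n) H1
  simp only [subst, gmap, if_pos rfl] at H2
  have ct := gmap_collapse A n bt
  have cu := gmap_collapse A n bu
  have H3 : Quot.mk (PolyEq (polyAlg A Unit) Unit)
        (.app (.of (.inr (Quot.mk _ (subst (g0 A n) t)))) (.of (.inl ())))
      = Quot.mk (PolyEq (polyAlg A Unit) Unit)
        (.app (.of (.inr (Quot.mk _ (subst (g0 A n) u)))) (.of (.inl ()))) :=
    (Quot.sound (PolyEq.congr ct (.refl _))).symm.trans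
      (H2.trans (Quot.sound (PolyEq.congr cu (.refl _))))
  have H4 := SR (Quot.mk _ (subst (g0 A n) t)) (Quot.mk _ (subst (g0 A n) u)) H3
  have H5 := quot_transport (hmap A n) (.refl _) (.refl _) (.refl _) (.refl _)
    (fun a b => PolyEq.inj a b) H4
  simp only [subst, hmap] at H5
  exact (Quot.sound (PolyEq.congr (.refl (.of (.inr A.e))) (subst_back A n bt))).symm.trans
    (H5.trans (Quot.sound (PolyEq.congr (.refl (.of (.inr A.e))) (subst_back A n bu))))

/-- Evaluation `A[ℕ] → A` sending every variable to `i`. -/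
def evA (A : CPM) : Tm (ℕ ⊕ A.carrier) → A.carrier
  | .of (.inl _) => A.i
  | .of (.inr a) => a
  | .app t u => A.app (evA A t) (evA A u)

theorem evA_sound (A : CPM) {t u : Tm (ℕ ⊕ A.carrier)} (h : PolyEq A ℕ t u) :
    evA A t = evA A u := by
  induction h with
  | kEq t u => exact A.k_ax _ _
  | sEq t u v => exact A.s_ax _ _ _
  | iEq t => exact A.i_ax _
  | eEq t u => exact A.e_ax _ _
  | inj a b => rfl
  | refl t => rfl
  | symm _ ih => exact ih.symm
  | trans _ _ ih1 ih2 => exact ih1.trans ih2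
  | congr _ _ ih1 ih2 => simp only [evA, ih1, ih2]

def retrHom (A : CPM) : CPMHom (polyAlg A ℕ) A where
  toFun := Quot.lift (evA A) (fun _ _ h => evA_sound A h)
  map_app := by
    intro a b
    induction a using Quot.ind with | _ t =>
    induction b using Quot.ind with | _ u =>
    rfl
  map_k := rfl
  map_s := rfl
  map_i := rfl
  map_e := rfl

end SR17
namespace SR17

/-! ### Backward direction: a retract of a combinatory model is strongly reflexive -/

def NoVar {C : Type} {V : Type} : Tm (V ⊕ C) → Prop
  | .of (.inl _) => False
  | .of (.inr _) => True
  | .app t u => NoVar t ∧ NoVar u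

/-- Bracket abstraction of the unique variable. -/
def lam (A : CPM) : Tm (Unit ⊕ A.carrier) → Tm (Unit ⊕ A.carrier)
  | .of (.inl _) => .of (.inr A.i)
  | .of (.inr a) => .app (.of (.inr A.k)) (.of (.inr a))
  | .app t u => .app (.app (.of (.inr A.s)) (lam A t)) (lam A u)

theorem lam_novar (A : CPM) (t : Tm (Unit ⊕ A.carrier)) : NoVar (lam A t) := by
  induction t with
  | of x => cases x with
    | inl v => trivial
    | inr a => exact ⟨trivial, trivial⟩
  | app t u iht ihu => exact ⟨⟨trivial, iht⟩, ihu⟩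

theorem lam_beta (A : CPM) (t : Tm (Unit ⊕ A.carrier)) :
    PolyEq A Unit (.app (lam A t) (.of (.inl ()))) t := by
  induction t with
  | of x => cases x with
    | inl v => cases v; exact .iEq _
    | inr a => exact .kEq _ _
  | app t u iht ihu => exact .trans (.sEq _ _ _) (.congr iht ihu)

/-- Evaluation of variable-free terms in `A`. -/
def evalA (A : CPM) {V : Type} : Tm (V ⊕ A.carrier) → A.carrier
  | .of (.inl _) => A.i
  | .of (.inr a) => a
  | .app t u => A.app (evalA A t) (evalA A u)

theorem collapseA (A : CPM) {V : Type} {t : Tm (V ⊕ A.carrier)} (h : NoVar t) :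
    PolyEq A V t (.of (.inr (evalA A t))) := by
  induction t with
  | of x => cases x with
    | inl v => exact absurd h id
    | inr a => exact .refl _
  | app t u iht ihu => exact .trans (.congr (iht h.1) (ihu h.2)) (.inj _ _)

section Backward

variable {A B : CPM} (f : CPMHom A B)

/-- Evaluation `A[x] → B` along a hom `f : A → B` sending `x ↦ b`. -/
def evB (b : B.carrier) : Tm (Unit ⊕ A.carrier) → B.carrier
  | .of (.inl _) => b
  | .of (.inr a) => f.toFun a
  | .app t u => B.app (evB b t) (evB b u)

theorem evB_sound (b : B.carrier) {t u : Tm (Unit ⊕ A.carrier)} (h : PolyEq A Unit t u) :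
    evB f b t = evB f b u := by
  induction h with
  | kEq t u => simp only [evB, f.map_k]; exact B.k_ax _ _
  | sEq t u v => simp only [evB, f.map_s]; exact B.s_ax _ _ _
  | iEq t => simp only [evB, f.map_i]; exact B.i_ax _
  | eEq t u => simp only [evB, f.map_e]; exact B.e_ax _ _
  | inj a b => exact (f.map_app _ _).symm
  | refl t => rfl
  | symm _ ih => exact ih.symm
  | trans _ _ ih1 ih2 => exact ih1.trans ih2
  | congr _ _ ih1 ih2 => simp only [evB, ih1, ih2]

def ev1 (b : B.carrier) : Quot (PolyEq A Unit) → B.carrier :=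
  Quot.lift (evB f b) (fun _ _ h => evB_sound f b h)

/-- Evaluation `A[x][y] → B` sending `x ↦ b`, `y ↦ c`. -/
def ev2 (b c : B.carrier) : Tm (Unit ⊕ (polyAlg A Unit).carrier) → B.carrier
  | .of (.inl _) => c
  | .of (.inr q) => ev1 f b q
  | .app t u => B.app (ev2 b c t) (ev2 b c u)

theorem ev2_sound (b c : B.carrier) {t u : Tm (Unit ⊕ (polyAlg A Unit).carrier)}
    (h : PolyEq (polyAlg A Unit) Unit t u) : ev2 f b c t = ev2 f b c u := by
  induction h with
  | kEq t u =>
    show B.app (B.app (evB f b (.of (.inr A.k))) _) _ = _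
    simp only [evB, f.map_k]; exact B.k_ax _ _
  | sEq t u v =>
    show B.app (B.app (B.app (evB f b (.of (.inr A.s))) _) _) _ = _
    simp only [evB, f.map_s]; exact B.s_ax _ _ _
  | iEq t =>
    show B.app (evB f b (.of (.inr A.i))) _ = _
    simp only [evB, f.map_i]; exact B.i_ax _
  | eEq t u =>
    show B.app (B.app (evB f b (.of (.inr A.e))) _) _ = _
    simp only [evB, f.map_e]; exact B.e_ax _ _
  | inj q1 q2 =>
    induction q1 using Quot.ind with | _ w1 =>
    induction q2 using Quot.ind with | _ w2 =>
    rfl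
  | refl t => rfl
  | symm _ ih => exact ih.symm
  | trans _ _ ih1 ih2 => exact ih1.trans ih2
  | congr _ _ ih1 ih2 => simp only [ev2, ih1, ih2]

def theta (b c : B.carrier) : Quot (PolyEq (polyAlg A Unit) Unit) → B.carrier :=
  Quot.lift (ev2 f b c) (fun _ _ h => ev2_sound f b c h)

theorem s_evalA (b : B.carrier) {t : Tm (Unit ⊕ A.carrier)} (h : NoVar t) :
    f.toFun (evalA A t) = evB f b t := by
  induction t with
  | of x => cases x with
    | inl v => exact absurd h id
    | inr a => rfl
  | app t u iht ihu =>
    show f.toFun (A.app _ _) = _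
    rw [f.map_app, iht h.1, ihu h.2]; rfl

theorem beta_val (b : B.carrier) (t : Tm (Unit ⊕ A.carrier)) (c : B.carrier) :
    B.app (evB f b (lam A t)) c = evB f c t := by
  induction t with
  | of x => cases x with
    | inl v => show B.app (f.toFun A.i) c = c; rw [f.map_i]; exact B.i_ax c
    | inr a =>
      show B.app (B.app (f.toFun A.k) (f.toFun a)) c = f.toFun a
      rw [f.map_k]; exact B.k_ax _ _
  | app t u iht ihu =>
    show B.app (B.app (B.app (f.toFun A.s) _) _) c = B.app _ _
    rw [f.map_s, B.s_ax, iht, ihu]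

end Backward

/-- "Enough points": if two polynomials agree at every point of the model `B`
(along the section `f`), they are already equal in `A[x]`. -/
theorem enough_points {A B : CPM} (f : CPMHom A B) (r : CPMHom B A)
    (hrs : ∀ a, r.toFun (f.toFun a) = a) (MS : MeyerScott B)
    {w w' : Tm (Unit ⊕ A.carrier)}
    (hw : ∀ b : B.carrier, evB f b w = evB f b w') : PolyEq A Unit w w' := by
  set m := evalA A (lam A w) with hm
  set m' := evalA A (lam A w') with hm'
  have key : A.app A.e m = A.app A.e m' := by
    have hb : ∀ c, B.app (f.toFun m) c = B.app (f.toFun m') c := by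
      intro c
      rw [hm, hm', s_evalA f c (lam_novar A w), s_evalA f c (lam_novar A w'),
        beta_val, beta_val, hw c]
    have hB := MS _ _ hb
    have := congrArg r.toFun hB
    rw [r.map_app, r.map_app, r.map_e, hrs, hrs] at this
    exact this
  have p1 : PolyEq A Unit w (.app (.of (.inr m)) (.of (.inl ()))) :=
    .trans (.symm (lam_beta A w)) (.congr (collapseA A (lam_novar A w)) (.refl _))
  have p1' : PolyEq A Unit w' (.app (.of (.inr m')) (.of (.inl ()))) :=
    .trans (.symm (lam_beta A w')) (.congr (collapseA A (lam_novar A w')) (.refl _))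
  have p2 : PolyEq A Unit (.app (.of (.inr m)) (.of (.inl ())))
      (.app (.of (.inr (A.app A.e m))) (.of (.inl ()))) :=
    .trans (.symm (.eEq _ _)) (.congr (.inj A.e m) (.refl _))
  have p2' : PolyEq A Unit (.app (.of (.inr m')) (.of (.inl ())))
      (.app (.of (.inr (A.app A.e m'))) (.of (.inl ()))) :=
    .trans (.symm (.eEq _ _)) (.congr (.inj A.e m') (.refl _))
  refine .trans p1 (.trans p2 (.trans ?_ (.symm (.trans p1' p2'))))
  rw [key]
  exact .refl _

theorem sr_of_retract {A B : CPM} (f : CPMHom A B) (r : CPMHom B A)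
    (hrs : ∀ a, r.toFun (f.toFun a) = a) (MS : MeyerScott B) :
    StronglyReflexive A := by
  intro a b
  induction a using Quot.ind with | _ t =>
  induction b using Quot.ind with | _ u =>
  intro Hy
  have fact1 : ∀ b0 c : B.carrier,
      B.app (evB f b0 t) c = B.app (evB f b0 u) c :=
    fun b0 c => congrArg (theta f b0 c) Hy
  have fact2 : ∀ b0 : B.carrier,
      B.app B.e (evB f b0 t) = B.app B.e (evB f b0 u) :=
    fun b0 => MS _ _ (fact1 b0)
  have fact3 : ∀ b0 : B.carrier,
      evB f b0 (.app (.of (.inr A.e)) t) = evB f b0 (.app (.of (.inr A.e)) u) := by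
    intro b0
    show B.app (f.toFun A.e) _ = B.app (f.toFun A.e) _
    rw [f.map_e]
    exact fact2 b0
  exact Quot.sound (enough_points f r hrs MS fact3)

end SR17
/-- a combinatory pre-model is strongly reflexive iff it is a
retract of a combinatory model. -/
theorem stronglyReflexive_iff_retract_of_combinatory_model (A : CPM) :
    StronglyReflexive A ↔
      ∃ (B : CPM) (s : CPMHom A B) (r : CPMHom B A),
        MeyerScott B ∧ ∀ a, r.toFun (s.toFun a) = a := by
  constructor
  · intro SR
    exact ⟨polyAlg A ℕ, eta A ℕ, SR17.retrHom A, SR17.model_of_sr A SR, fun a => rfl⟩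
  · rintro ⟨B, s, r, MS, hrs⟩
    exact SR17.sr_of_retract s r hrs MS
end
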